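/- Pullback identity for the symplectization form under front spinning of a cobordism (Formulas (4.7)–(4.8) in the paper): let n ≥ 1, let E be a real normed vector space, and let g : E → ℝ × ℝ^{2n+1} have component functions t, x_1, y_1, …, x_n, y_n, z, each differentiable at p ∈ E. Then for every θ ∈ ℝ and all pairs (v, s), (w, r) ∈ E × ℝ, the symplectization 2-form ω_{n+1} at the point Σg(p,θ), evaluated on the pair of vectors (D(Σg)(p,θ)(v,s), D(Σg)(p,θ)(w,r)), equals the symplectization 2-form ω_n at the point g(p), evaluated on the pair (Dg(p)(v), Dg(p)(w)). -/

import Mathlib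

/-!
Pullback identity for the symplectization form under front spinning of a
cobordism (Formulas (4.7)–(4.8) in the paper).

Coordinates on `ℝ × ℝ^{2n+1}` are `(t, x_1, y_1, …, x_n, y_n, z)`; a map
`g : E → ℝ × ℝ^{2n+1}` is given by its component functions
`t, x_1, y_1, …, x_n, y_n, z : E → ℝ`.

The front spinning `Σg : E × ℝ → ℝ × ℝ^{2n+3}` has component functions
`T = t`, `X_0 = x_1 sin θ`, `Y_0 = y_1 sin θ`, `X_1 = x_1 cos θ`,
`Y_1 = y_1 cos θ`, `X_i = x_i`, `Y_i = y_i` for `i ≥ 2`, and `Z = z`.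

The symplectization form `ω = d(e^t α)` at a point `q`, on a pair of vectors
`(u, v)`, is `e^{t(q)}·[u_t·(v_z − Σ y_i(q) v_{x_i}) − v_t·(u_z − Σ y_i(q) u_{x_i})
− Σ (u_{y_i} v_{x_i} − v_{y_i} u_{x_i})]`; its pullback under a parametrization
with component functions `t, x_i, y_i, z` evaluated on tangent vectors `u, v`
at `p` is `sympPull` below (the index set `S` is `{1, …, n}` for `ω_n` and
`{0, …, n}` for `ω_{n+1}`).
-/

/-- The `x`-component functions of the front-spun map. -/
noncomputable def spinX {E : Type*} (x : ℕ → E → ℝ) : ℕ → E × ℝ → ℝ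
  | 0 => fun q => x 1 q.1 * Real.sin q.2
  | 1 => fun q => x 1 q.1 * Real.cos q.2
  | (i + 2) => fun q => x (i + 2) q.1

/-- The `y`-component functions of the front-spun map. -/
noncomputable def spinY {E : Type*} (y : ℕ → E → ℝ) : ℕ → E × ℝ → ℝ
  | 0 => fun q => y 1 q.1 * Real.sin q.2
  | 1 => fun q => y 1 q.1 * Real.cos q.2
  | (i + 2) => fun q => y (i + 2) q.1

/-- The `z`-component function of the front-spun map. -/
def spinZ {E : Type*} (z : E → ℝ) : E × ℝ → ℝ := fun q => z q.1

/-- The `t`-component function of the front-spun cobordism. -/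
def spinT {E : Type*} (t : E → ℝ) : E × ℝ → ℝ := fun q => t q.1

/-- The pullback of the symplectization form `ω = d(e^t α)` under the
parametrization with component functions `t, x_i, y_i (i ∈ S), z`, evaluated
at the point `p` on the pair of tangent vectors `(u, v)`:
`ω` at the image point applied to `(Dg(p)u, Dg(p)v)`. -/
noncomputable def sympPull {F : Type*} [NormedAddCommGroup F] [NormedSpace ℝ F]
    (S : Finset ℕ) (t : F → ℝ) (x y : ℕ → F → ℝ) (z : F → ℝ) (p : F) (u v : F) : ℝ :=
  Real.exp (t p) *
    (fderiv ℝ t p u * (fderiv ℝ z p v - ∑ i ∈ S, y i p * fderiv ℝ (x i) p v) -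
      fderiv ℝ t p v * (fderiv ℝ z p u - ∑ i ∈ S, y i p * fderiv ℝ (x i) p u) -
      ∑ i ∈ S, (fderiv ℝ (y i) p u * fderiv ℝ (x i) p v -
        fderiv ℝ (y i) p v * fderiv ℝ (x i) p u))

/-! Spinning only replaces the pair `(x₁, y₁)` by `(x₁ sin θ, y₁ sin θ)` and
`(x₁ cos θ, y₁ cos θ)`. Since `sin² θ + cos² θ = 1`, the indices `0` and `1` together
contribute to `Σ yᵢ dxᵢ` and to `Σ dyᵢ ∧ dxᵢ` exactly what index `1` contributed before
spinning, the `dθ`-terms cancelling; all other components are independent of `θ`. -/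

open Finset ContinuousLinearMap

section Calculus

variable {𝕜 E F G : Type*} [NontriviallyNormedField 𝕜] [NormedAddCommGroup E] [NormedSpace 𝕜 E]
  [NormedAddCommGroup F] [NormedSpace 𝕜 F] [NormedAddCommGroup G] [NormedSpace 𝕜 G]

/-- No differentiability is needed: if `f` is not differentiable at `p`, then neither is
`f ∘ Prod.fst` at `(p, θ)`, because `f` factors through it via `e ↦ (e, θ)`. -/
theorem fderiv_comp_fst_apply (f : E → F) (p : E) (θ : G) (v : E) (s : G) :
    fderiv 𝕜 (fun q : E × G => f q.1) (p, θ) (v, s) = fderiv 𝕜 f p v := by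
  by_cases hf : DifferentiableAt 𝕜 f p
  · have hfst : HasFDerivAt (fun q : E × G => f q.1) ((fderiv 𝕜 f p).comp (fst 𝕜 E G)) (p, θ) :=
      hf.hasFDerivAt.comp (p, θ) hasFDerivAt_fst
    rw [hfst.fderiv]
    rfl
  · have hfst : ¬ DifferentiableAt 𝕜 (fun q : E × G => f q.1) (p, θ) := fun h =>
      hf (h.comp (f := fun e => (e, θ)) p (differentiableAt_id.prodMk (differentiableAt_const θ)))
    rw [fderiv_zero_of_not_differentiableAt hf, fderiv_zero_of_not_differentiableAt hfst]
    rfl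

theorem fderiv_fst_mul_snd_apply {f : E → 𝕜} {g : 𝕜 → 𝕜} {p : E} {θ : 𝕜}
    (hf : DifferentiableAt 𝕜 f p) (hg : DifferentiableAt 𝕜 g θ) (v : E) (s : 𝕜) :
    fderiv 𝕜 (fun q : E × 𝕜 => f q.1 * g q.2) (p, θ) (v, s) =
      fderiv 𝕜 f p v * g θ + f p * (deriv g θ * s) := by
  have hfst : HasFDerivAt (fun q : E × 𝕜 => f q.1) ((fderiv 𝕜 f p).comp (fst 𝕜 E 𝕜)) (p, θ) :=
    hf.hasFDerivAt.comp (p, θ) hasFDerivAt_fst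
  have hsnd : HasFDerivAt (fun q : E × 𝕜 => g q.2)
      ((smulRight (1 : 𝕜 →L[𝕜] 𝕜) (deriv g θ)).comp (snd 𝕜 E 𝕜)) (p, θ) :=
    hg.hasDerivAt.hasFDerivAt.comp (p, θ) hasFDerivAt_snd
  have hmul : HasFDerivAt (fun q : E × 𝕜 => f q.1 * g q.2) _ (p, θ) := hfst.mul hsnd
  rw [hmul.fderiv]
  simp only [add_apply, smul_apply, comp_apply, coe_fst', coe_snd', smulRight_apply,
    one_apply_eq_self, smul_eq_mul]
  ring

end Calculus

theorem sum_Icc_zero_eq_sum_Icc_one {M : Type*} [AddCommMonoid M] {n : ℕ} (hn : 1 ≤ n)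
    (F G : ℕ → M) (h01 : F 0 + F 1 = G 1) (h : ∀ i, F (i + 2) = G (i + 2)) :
    ∑ i ∈ Icc 0 n, F i = ∑ i ∈ Icc 1 n, G i := by
  have htail : ∑ i ∈ Icc 2 n, F i = ∑ i ∈ Icc 2 n, G i := sum_congr rfl fun i hi => by
    obtain ⟨k, rfl⟩ := Nat.exists_eq_add_of_le' (mem_Icc.1 hi).1
    exact h k
  rw [← insert_Icc_add_one_left_eq_Icc (Nat.zero_le n), sum_insert (by simp), zero_add,
    ← insert_Icc_add_one_left_eq_Icc hn, sum_insert (by simp), sum_insert (by simp),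
    one_add_one_eq_two, htail, ← add_assoc, h01]

theorem spinY_eq_spinX {E : Type*} : spinY (E := E) = spinX := by
  funext f i
  rcases i with _ | _ | i <;> rfl

section Spinning

variable {E : Type*} [NormedAddCommGroup E] [NormedSpace ℝ E]
  {x y : ℕ → E → ℝ} {p : E} {θ : ℝ}

theorem fderiv_spinX_add_two_apply (i : ℕ) (v : E) (s : ℝ) :
    fderiv ℝ (spinX x (i + 2)) (p, θ) (v, s) = fderiv ℝ (x (i + 2)) p v :=
  fderiv_comp_fst_apply (x (i + 2)) p θ v s

theorem fderiv_spinX_zero_apply (hx : DifferentiableAt ℝ (x 1) p) (v : E) (s : ℝ) :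
    fderiv ℝ (spinX x 0) (p, θ) (v, s) =
      fderiv ℝ (x 1) p v * Real.sin θ + x 1 p * (Real.cos θ * s) := by
  rw [spinX, fderiv_fst_mul_snd_apply hx Real.differentiableAt_sin, Real.deriv_sin]

theorem fderiv_spinX_one_apply (hx : DifferentiableAt ℝ (x 1) p) (v : E) (s : ℝ) :
    fderiv ℝ (spinX x 1) (p, θ) (v, s) =
      fderiv ℝ (x 1) p v * Real.cos θ - x 1 p * (Real.sin θ * s) := by
  rw [spinX, fderiv_fst_mul_snd_apply hx Real.differentiableAt_cos, Real.deriv_cos]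
  ring

theorem sum_spinY_mul_fderiv_spinX {n : ℕ} (hn : 1 ≤ n) (hx : DifferentiableAt ℝ (x 1) p)
    (v : E) (s : ℝ) :
    ∑ i ∈ Icc 0 n, spinY y i (p, θ) * fderiv ℝ (spinX x i) (p, θ) (v, s) =
      ∑ i ∈ Icc 1 n, y i p * fderiv ℝ (x i) p v := by
  refine sum_Icc_zero_eq_sum_Icc_one hn _ _ ?_ fun i => by rw [fderiv_spinX_add_two_apply]; rfl
  rw [fderiv_spinX_zero_apply hx, fderiv_spinX_one_apply hx]
  simp only [spinY]
  linear_combination y 1 p * fderiv ℝ (x 1) p v * Real.sin_sq_add_cos_sq θ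

theorem sum_fderiv_spinY_wedge_fderiv_spinX {n : ℕ} (hn : 1 ≤ n)
    (hx : DifferentiableAt ℝ (x 1) p) (hy : DifferentiableAt ℝ (y 1) p) (v w : E) (s r : ℝ) :
    ∑ i ∈ Icc 0 n, (fderiv ℝ (spinY y i) (p, θ) (v, s) * fderiv ℝ (spinX x i) (p, θ) (w, r) -
        fderiv ℝ (spinY y i) (p, θ) (w, r) * fderiv ℝ (spinX x i) (p, θ) (v, s)) =
      ∑ i ∈ Icc 1 n, (fderiv ℝ (y i) p v * fderiv ℝ (x i) p w -
        fderiv ℝ (y i) p w * fderiv ℝ (x i) p v) := by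
  rw [spinY_eq_spinX]
  refine sum_Icc_zero_eq_sum_Icc_one hn _ _ ?_ fun i => by simp only [fderiv_spinX_add_two_apply]
  simp only [fderiv_spinX_zero_apply hx, fderiv_spinX_one_apply hx,
    fderiv_spinX_zero_apply hy, fderiv_spinX_one_apply hy]
  linear_combination (fderiv ℝ (y 1) p v * fderiv ℝ (x 1) p w -
    fderiv ℝ (y 1) p w * fderiv ℝ (x 1) p v) * Real.sin_sq_add_cos_sq θ

end Spinning

theorem front_spinning_symplectization_form_pullback_general
    {E : Type*} [NormedAddCommGroup E] [NormedSpace ℝ E]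
    (n : ℕ) (hn : 1 ≤ n) (t : E → ℝ) (x y : ℕ → E → ℝ) (z : E → ℝ) (p : E)
    (hx : ∀ i ∈ Finset.Icc 1 n, DifferentiableAt ℝ (x i) p)
    (hy : ∀ i ∈ Finset.Icc 1 n, DifferentiableAt ℝ (y i) p) :
    ∀ (θ : ℝ) (v w : E) (s r : ℝ),
      sympPull (Finset.Icc 0 n) (spinT t) (spinX x) (spinY y) (spinZ z)
          (p, θ) (v, s) (w, r) =
        sympPull (Finset.Icc 1 n) t x y z p v w := by
  intro θ v w s r
  have hx1 := hx 1 (left_mem_Icc.2 hn)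
  rw [sympPull, sympPull, sum_spinY_mul_fderiv_spinX hn hx1, sum_spinY_mul_fderiv_spinX hn hx1,
    sum_fderiv_spinY_wedge_fderiv_spinX hn hx1 (hy 1 (left_mem_Icc.2 hn))]
  unfold spinT spinZ
  simp only [fderiv_comp_fst_apply]

/-- **Pullback identity for the symplectization form under front spinning**
(Formulas (4.7)–(4.8) in the paper). If the component functions of
`g : E → ℝ × ℝ^{2n+1}` are differentiable at `p`, then for every `θ` and all
pairs `(v,s), (w,r) ∈ E × ℝ` the form `ω_{n+1}` at `Σg(p,θ)` evaluated on
`(D(Σg)(p,θ)(v,s), D(Σg)(p,θ)(w,r))` equals `ω_n` at `g(p)` evaluated on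
`(Dg(p)(v), Dg(p)(w))`. -/
theorem front_spinning_symplectization_form_pullback
    {E : Type*} [NormedAddCommGroup E] [NormedSpace ℝ E]
    (n : ℕ) (hn : 1 ≤ n) (t : E → ℝ) (x y : ℕ → E → ℝ) (z : E → ℝ) (p : E)
    (ht : DifferentiableAt ℝ t p)
    (hx : ∀ i ∈ Finset.Icc 1 n, DifferentiableAt ℝ (x i) p)
    (hy : ∀ i ∈ Finset.Icc 1 n, DifferentiableAt ℝ (y i) p)
    (hz : DifferentiableAt ℝ z p) :
    ∀ (θ : ℝ) (v w : E) (s r : ℝ),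
      sympPull (Finset.Icc 0 n) (spinT t) (spinX x) (spinY y) (spinZ z)
          (p, θ) (v, s) (w, r) =
        sympPull (Finset.Icc 1 n) t x y z p v w :=
  front_spinning_symplectization_form_pullback_general n hn t x y z p hx hy
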